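/- Let f : X → Y be a convexity-preserving map between L-convex spaces, and let G be an algebraic irreducible convex set of X. Then co_Y(f^→(G)) is an algebraic irreducible convex set of Y. -/
import Mathlib


/-- A commutative integral quantale: a complete lattice with a commutative
monoid structure whose unit is the top element and which distributes over
arbitrary joins; `res` is the residuum determined by adjointness. -/
class CIQuantale (L : Type*) extends CompleteLattice L, CommMonoid L where
  mul_sSup : ∀ (a : L) (S : Set L), a * sSup S = ⨆ b ∈ S, a * b
  one_eq_top : (1 : L) = ⊤
  res : L → L → L
  res_adj : ∀ a b c : L, a * b ≤ c ↔ a ≤ res b c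

open CIQuantale

variable {L : Type*} [CIQuantale L]

/-- The inclusion L-order `sub` on `L^X`. -/
def lsub {X : Type*} (A B : X → L) : L := ⨅ x, res (A x) (B x)

/-- Zadeh forward image. -/
def fimg {X Y : Type*} (f : X → Y) (A : X → L) : Y → L :=
  fun y => ⨆ x, ⨆ _ : f x = y, A x

/-- Zadeh preimage. -/
def fpre {X Y : Type*} (f : X → Y) (B : Y → L) : X → L := fun x => B (f x)

/-- `e` is an L-order. -/
def IsLOrder {P : Type*} (e : P → P → L) : Prop :=
  (∀ x, e x x = 1) ∧ (∀ x y z, e x y * e y z ≤ e x z) ∧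
  (∀ x y, e x y ⊓ e y x = 1 → x = y)

/-- `x₀` is a supremum of `A` (definition form). -/
def IsSupD {P : Type*} (e : P → P → L) (A : P → L) (x₀ : P) : Prop :=
  (∀ x, A x ≤ e x x₀) ∧ ∀ y, (⨅ x, res (A x) (e x y)) ≤ e x₀ y

/-- `x₀` is an infimum of `A` (definition form). -/
def IsInfD {P : Type*} (e : P → P → L) (A : P → L) (x₀ : P) : Prop :=
  (∀ x, A x ≤ e x₀ x) ∧ ∀ y, (⨅ x, res (A x) (e y x)) ≤ e y x₀

/-- `x₀` is a supremum of `A` (characterization form). -/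
def IsSupE {P : Type*} (e : P → P → L) (A : P → L) (x₀ : P) : Prop :=
  ∀ y, e x₀ y = ⨅ x, res (A x) (e x y)

/-- `x₀` is an infimum of `A` (characterization form). -/
def IsInfE {P : Type*} (e : P → P → L) (A : P → L) (x₀ : P) : Prop :=
  ∀ y, e y x₀ = ⨅ x, res (A x) (e y x)

/-- A stratified L-convex structure on `X`. -/
def IsConvexStruct {X : Type*} (𝒞 : Set (X → L)) : Prop :=
  ((fun _ => (⊥ : L)) ∈ 𝒞) ∧ ((fun _ => (⊤ : L)) ∈ 𝒞) ∧
  (∀ D : Set (X → L), D ⊆ 𝒞 → D.Nonempty → DirectedOn (· ≤ ·) D →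
    (fun x => ⨆ C ∈ D, C x) ∈ 𝒞) ∧
  (∀ D : Set (X → L), D ⊆ 𝒞 → (fun x => ⨅ C ∈ D, C x) ∈ 𝒞) ∧
  (∀ p : L, ∀ C ∈ 𝒞, (fun x => res p (C x)) ∈ 𝒞)

/-- The hull operator of the convex structure `𝒞`. -/
def hull {X : Type*} (𝒞 : Set (X → L)) (A : X → L) : X → L :=
  fun x => ⨅ C ∈ {C | C ∈ 𝒞 ∧ A ≤ C}, C x

/-- Convexity-preserving maps. -/
def ConvPres {X Y : Type*} (𝒞X : Set (X → L)) (𝒞Y : Set (Y → L)) (f : X → Y) : Prop :=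
  ∀ D ∈ 𝒞Y, fpre f D ∈ 𝒞X

/-- The characteristic function `1_x`. -/
def lchar {X : Type*} (x : X) : X → L := fun y => ⨆ _ : y = x, (1 : L)

/-- Algebraic irreducible convex sets. -/
def AlgIrr {X : Type*} (𝒞 : Set (X → L)) (F : X → L) : Prop :=
  F ∈ 𝒞 ∧ (⨆ x, F x) = 1 ∧
  ∀ D : Set (X → L), D ⊆ 𝒞 → D.Nonempty → DirectedOn (· ≤ ·) D →
    lsub F (fun x => ⨆ C ∈ D, C x) = ⨆ C ∈ D, lsub F C

/-- Sober L-convex spaces (Liu–Yue). -/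
def Sober {X : Type*} (𝒞 : Set (X → L)) : Prop :=
  ∀ F, AlgIrr 𝒞 F → ∃! a : X, F = hull 𝒞 (lchar a)

/-- The S₀ separation axiom (hull form). -/
def S0 {X : Type*} (𝒞 : Set (X → L)) : Prop :=
  ∀ x y : X, hull 𝒞 (lchar x) = hull 𝒞 (lchar y) → x = y

/-- The S₀ separation axiom (separation form). -/
def S0sep {X : Type*} (𝒞 : Set (X → L)) : Prop :=
  ∀ x y : X, x ≠ y → ∃ C ∈ 𝒞, C x ≠ C y

/-- Homeomorphism of L-convex spaces. -/
def Homeo {A B : Type*} (𝒞A : Set (A → L)) (𝒞B : Set (B → L)) (h : A → B) : Prop :=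
  Function.Bijective h ∧ ConvPres 𝒞A 𝒞B h ∧ ∀ C ∈ 𝒞A, fimg h C ∈ 𝒞B


section AuxLemmas
variable {L : Type*} [CIQuantale L]

lemma q_mul_le_mul_left {a b c : L} (h : a ≤ b) : a * c ≤ b * c := by
  have hb : b ≤ res c (b * c) := (res_adj b c (b * c)).mp le_rfl
  exact (res_adj a c (b * c)).mpr (h.trans hb)

lemma q_mul_le_mul_right {a b c : L} (h : a ≤ b) : c * a ≤ c * b := by
  rw [mul_comm c a, mul_comm c b]; exact q_mul_le_mul_left h

lemma q_res_mul_le {b c : L} : res b c * b ≤ c := (res_adj _ b c).mpr le_rfl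

lemma q_res_anti {a b c : L} (h : a ≤ b) : res b c ≤ res a c :=
  (res_adj _ a c).mp (le_trans (q_mul_le_mul_right h) q_res_mul_le)

lemma q_mul_iSup {ι : Sort*} (a : L) (f : ι → L) : a * (⨆ i, f i) = ⨆ i, a * f i := by
  rw [iSup, mul_sSup]
  rw [iSup_range]

lemma le_lsub {X : Type*} {A B : X → L} {p : L} (h : ∀ x, p * A x ≤ B x) :
    p ≤ lsub A B := le_iInf fun x => (res_adj _ _ _).mp (h x)

lemma lsub_mul_le {X : Type*} (A B : X → L) (x : X) : lsub A B * A x ≤ B x :=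
  le_trans (q_mul_le_mul_left (iInf_le _ x)) q_res_mul_le

lemma le_hull {X : Type*} (C : Set (X → L)) (A : X → L) : A ≤ hull C A :=
  fun x => le_iInf₂ fun _ hC => hC.2 x

lemma hull_le {X : Type*} {S : Set (X → L)} {A C : X → L} (hC : C ∈ S) (h : A ≤ C) :
    hull S A ≤ C :=
  fun x => iInf_le_of_le C (iInf_le_of_le ⟨hC, h⟩ le_rfl)

lemma hull_mem {X : Type*} {S : Set (X → L)} (h : IsConvexStruct S) (A : X → L) :
    hull S A ∈ S := h.2.2.2.1 _ (fun _ hC => hC.1)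

lemma lsub_hull {X : Type*} {S : Set (X → L)} (h : IsConvexStruct S) {A B : X → L}
    (hB : B ∈ S) : lsub (hull S A) B = lsub A B := by
  apply le_antisymm
  · exact le_iInf fun x => le_trans (iInf_le _ x) (q_res_anti (le_hull S A x))
  · set p := lsub A B with hp
    have hC : (fun x => res p (B x)) ∈ S := h.2.2.2.2 p B hB
    have hAC : A ≤ fun x => res p (B x) := fun x => (res_adj _ _ _).mp
      (by rw [mul_comm]; exact lsub_mul_le A B x)
    have hle := hull_le hC hAC
    refine le_lsub fun x => ?_
    have h2 : hull S A x * p ≤ B x := (res_adj _ _ _).mpr (hle x)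
    rw [mul_comm]; exact h2

lemma lsub_fimg {X Y : Type*} (f : X → Y) (G : X → L) (D : Y → L) :
    lsub (fimg f G) D = lsub G (fpre f D) := by
  apply le_antisymm
  · refine le_iInf fun x => ?_
    have h1 : G x ≤ fimg f G (f x) := le_iSup_of_le x (le_iSup_of_le rfl le_rfl)
    exact le_trans (iInf_le _ (f x)) (q_res_anti h1)
  · refine le_lsub fun y => ?_
    show lsub G (fpre f D) * (⨆ x, ⨆ _ : f x = y, G x) ≤ D y
    rw [q_mul_iSup]
    refine iSup_le fun x => ?_
    rw [q_mul_iSup]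
    refine iSup_le fun hx => ?_
    rw [← hx]
    exact lsub_mul_le G (fpre f D) x

end AuxLemmas

theorem stmt15 {X Y : Type*} (𝒞X : Set (X → L)) (𝒞Y : Set (Y → L))
    (hX : IsConvexStruct 𝒞X) (hY : IsConvexStruct 𝒞Y)
    (f : X → Y) (hf : ConvPres 𝒞X 𝒞Y f)
    (G : X → L) (hG : AlgIrr 𝒞X G) :
    AlgIrr 𝒞Y (hull 𝒞Y (fimg f G)) := by
  obtain ⟨hGmem, hGsup, hGalg⟩ := hG
  refine ⟨hull_mem hY _, ?_, ?_⟩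
  · apply le_antisymm
    · rw [one_eq_top]; exact le_top
    · rw [← hGsup]
      refine iSup_le fun x => le_iSup_of_le (f x) ?_
      have hx : G x ≤ fimg f G (f x) := le_iSup_of_le x (le_iSup_of_le rfl le_rfl)
      exact le_trans hx (le_hull 𝒞Y (fimg f G) (f x))
  · intro D hD hne hdir
    have hD' : fpre f '' D ⊆ 𝒞X := by rintro _ ⟨C, hC, rfl⟩; exact hf C (hD hC)
    have hne' : (fpre f '' D).Nonempty := hne.image _
    have hdir' : DirectedOn (· ≤ ·) (fpre f '' D) := by
      rintro _ ⟨C1, h1, rfl⟩ _ ⟨C2, h2, rfl⟩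
      obtain ⟨C3, h3, h13, h23⟩ := hdir C1 h1 C2 h2
      exact ⟨fpre f C3, ⟨C3, h3, rfl⟩, fun x => h13 (f x), fun x => h23 (f x)⟩
    have hsup_mem : (fun y => ⨆ C ∈ D, C y) ∈ 𝒞Y := hY.2.2.1 D hD hne hdir
    have key := hGalg (fpre f '' D) hD' hne' hdir'
    rw [lsub_hull hY hsup_mem, lsub_fimg]
    have e1 : fpre f (fun y => ⨆ C ∈ D, C y) = fun x => ⨆ C ∈ fpre f '' D, C x := by
      funext x
      rw [iSup_image]
      rfl
    rw [e1, key, iSup_image]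
    exact iSup_congr fun C => iSup_congr fun hC => by
      rw [← lsub_fimg, lsub_hull hY (hD hC)]
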